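/- arXiv:quant-ph/0505091 — 2 statements merged into one kernel-verified Lean document; each statement's English description precedes it below -/
import Mathlib

section
/- For every three-qubit pure state ψ, the concurrence of assistance satisfies the dual monogamy inequality C_a(ρ_AB)² + C_a(ρ_AS)² ≥ 4·det ρ_A, i.e. the sum of squared concurrences of assistance of Alice's two reduced states is at least the squared concurrence C_{A(BS)}² of ψ across the A|(BS) cut. (Here det ρ_A is a nonnegative real number.) -/
/-!
If `μᵢ ≥ 0` are the eigenvalues of `√ρ ρ̃ √ρ`, then
`C_a(ρ)² = (∑ √μᵢ)² ≥ ∑ μᵢ = Tr (ρ ρ̃)`.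
For the two reduced states of a pure three-qubit state,
`Tr (ρ_AB ρ̃_AB) + Tr (ρ_AS ρ̃_AS) = 4 det ρ_A` is a polynomial identity in the amplitudes.
-/

open Matrix Complex Kronecker Finset
open scoped ComplexOrder

noncomputable section

abbrev TwoQubitMat := Matrix (Fin 2 × Fin 2) (Fin 2 × Fin 2) ℂ

def sigmaY : Matrix (Fin 2) (Fin 2) ℂ := !![0, -Complex.I; Complex.I, 0]

def spinFlip (ρ : TwoQubitMat) : TwoQubitMat :=
  (sigmaY ⊗ₖ sigmaY) * ρ.map (starRingEnd ℂ) * (sigmaY ⊗ₖ sigmaY)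

def matSqrt {m : Type*} [Fintype m] [DecidableEq m] (M : Matrix m m ℂ) : Matrix m m ℂ :=
  open scoped Classical in
  if h : M.PosSemidef then
    (h.1.eigenvectorUnitary : Matrix m m ℂ) * diagonal ((↑) ∘ (√·) ∘ h.1.eigenvalues) *
      (star h.1.eigenvectorUnitary : Matrix m m ℂ) else 0

def Rmat (ρ : TwoQubitMat) : TwoQubitMat :=
  matSqrt (matSqrt ρ * spinFlip ρ * matSqrt ρ)

def CoA (ρ : TwoQubitMat) : ℝ := (Rmat ρ).trace.re

def lmin2 (M : Matrix (Fin 2) (Fin 2) ℂ) : ℝ :=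
  if h : M.IsHermitian then min (h.eigenvalues 0) (h.eigenvalues 1) else 0

def maxEig4 (M : TwoQubitMat) : ℝ :=
  if h : M.IsHermitian then Finset.univ.sup' Finset.univ_nonempty h.eigenvalues else 0

def Conc (ρ : TwoQubitMat) : ℝ := max 0 (2 * maxEig4 (Rmat ρ) - (Rmat ρ).trace.re)

def eigMultiset (M : TwoQubitMat) : Multiset ℝ :=
  if h : M.IsHermitian then Finset.univ.val.map h.eigenvalues else 0

def rhoAB (ψ : Fin 2 → Fin 2 → Fin 2 → ℂ) : TwoQubitMat :=
  fun p q => ∑ l, ψ p.1 p.2 l * (starRingEnd ℂ) (ψ q.1 q.2 l)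

def rhoAS (ψ : Fin 2 → Fin 2 → Fin 2 → ℂ) : TwoQubitMat :=
  fun p q => ∑ j, ψ p.1 j p.2 * (starRingEnd ℂ) (ψ q.1 j q.2)

def rhoA (ψ : Fin 2 → Fin 2 → Fin 2 → ℂ) : Matrix (Fin 2) (Fin 2) ℂ :=
  fun i i' => ∑ j, ∑ l, ψ i j l * (starRingEnd ℂ) (ψ i' j l)

section MatSqrt

variable {m : Type*} [Fintype m] [DecidableEq m] {M : Matrix m m ℂ}

lemma matSqrt_posSemidef (hM : M.PosSemidef) : (matSqrt M).PosSemidef := by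
  rw [matSqrt, dif_pos hM, Matrix.star_eq_conjTranspose]
  refine (Matrix.PosSemidef.diagonal fun i => ?_).mul_mul_conjTranspose_same _
  simp [Real.sqrt_nonneg]

lemma matSqrt_mul_self (hM : M.PosSemidef) : matSqrt M * matSqrt M = M := by
  rw [matSqrt, dif_pos hM]
  conv_rhs => rw [hM.1.spectral_theorem, Unitary.conjStarAlgAut_apply]
  simp only [Matrix.mul_assoc]
  rw [← Matrix.mul_assoc (star _) _ (_ * star _), Unitary.coe_star_mul_self, Matrix.one_mul,
    ← Matrix.mul_assoc (diagonal _), diagonal_mul_diagonal]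
  congr 3
  funext i
  simp [← Complex.ofReal_mul, Real.mul_self_sqrt (hM.eigenvalues_nonneg i)]

lemma trace_matSqrt (hM : M.PosSemidef) :
    (matSqrt M).trace = ∑ i, ((√(hM.1.eigenvalues i) : ℝ) : ℂ) := by
  rw [matSqrt, dif_pos hM, trace_mul_cycle, Unitary.coe_star_mul_self, Matrix.one_mul,
    trace_diagonal]
  rfl

/-- With `μᵢ ≥ 0` the eigenvalues of `M`, this is `∑ μᵢ ≤ (∑ √μᵢ)²`. -/
lemma re_trace_le_sq_re_trace_matSqrt (hM : M.PosSemidef) :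
    M.trace.re ≤ (matSqrt M).trace.re ^ 2 := by
  have hsum : M.trace.re = ∑ i, √(hM.1.eigenvalues i) ^ 2 := by
    simp [hM.1.trace_eq_sum_eigenvalues, Real.sq_sqrt (hM.eigenvalues_nonneg _)]
  rw [hsum, trace_matSqrt hM]
  simpa using Finset.sum_sq_le_sq_sum_of_nonneg fun i _ => Real.sqrt_nonneg _

end MatSqrt

lemma sigmaY_kronecker_sigmaY_isHermitian : (sigmaY ⊗ₖ sigmaY).IsHermitian := by
  have hY : sigmaY.IsHermitian := by
    ext i j
    fin_cases i <;> fin_cases j <;> simp [sigmaY]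
  rw [IsHermitian, conjTranspose_kronecker, hY.eq]

lemma spinFlip_posSemidef {ρ : TwoQubitMat} (hρ : ρ.PosSemidef) : (spinFlip ρ).PosSemidef := by
  have hconj : ρ.map (starRingEnd ℂ) = ρᵀ := by
    ext i j
    simp [← hρ.1.apply i j]
  rw [spinFlip, hconj]
  simpa [sigmaY_kronecker_sigmaY_isHermitian.eq] using
    hρ.transpose.conjTranspose_mul_mul_same (sigmaY ⊗ₖ sigmaY)

lemma re_trace_mul_spinFlip_le_CoA_sq {ρ : TwoQubitMat} (hρ : ρ.PosSemidef) :
    (ρ * spinFlip ρ).trace.re ≤ CoA ρ ^ 2 := by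
  have hsqrt := matSqrt_posSemidef hρ
  have hM : (matSqrt ρ * spinFlip ρ * matSqrt ρ).PosSemidef := by
    simpa [hsqrt.1.eq] using (spinFlip_posSemidef hρ).conjTranspose_mul_mul_same (matSqrt ρ)
  have htrace : (matSqrt ρ * spinFlip ρ * matSqrt ρ).trace = (ρ * spinFlip ρ).trace := by
    rw [trace_mul_cycle, matSqrt_mul_self hρ]
  rw [← htrace]
  exact re_trace_le_sq_re_trace_matSqrt hM

lemma posSemidef_sum_mul_conj {m k : Type*} [Fintype m] [Fintype k] (v : m → k → ℂ) :
    (Matrix.of fun p q => ∑ l, v p l * starRingEnd ℂ (v q l)).PosSemidef := by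
  convert posSemidef_self_mul_conjTranspose (Matrix.of v) using 1
  ext p q
  simp [mul_apply]

lemma rhoAB_posSemidef (ψ : Fin 2 → Fin 2 → Fin 2 → ℂ) : (rhoAB ψ).PosSemidef :=
  posSemidef_sum_mul_conj fun (p : Fin 2 × Fin 2) l => ψ p.1 p.2 l

lemma rhoAS_posSemidef (ψ : Fin 2 → Fin 2 → Fin 2 → ℂ) : (rhoAS ψ).PosSemidef :=
  posSemidef_sum_mul_conj fun (p : Fin 2 × Fin 2) j => ψ p.1 j p.2

lemma rhoA_posSemidef (ψ : Fin 2 → Fin 2 → Fin 2 → ℂ) : (rhoA ψ).PosSemidef := by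
  convert posSemidef_sum_mul_conj fun i (q : Fin 2 × Fin 2) => ψ i q.1 q.2 using 1
  ext i i'
  simp [rhoA, Fintype.sum_prod_type]

lemma trace_mul_spinFlip_rhoAB_add_rhoAS (ψ : Fin 2 → Fin 2 → Fin 2 → ℂ) :
    (rhoAB ψ * spinFlip (rhoAB ψ)).trace + (rhoAS ψ * spinFlip (rhoAS ψ)).trace =
      4 * (rhoA ψ).det := by
  simp only [trace, Matrix.diag, mul_apply, spinFlip, rhoAB, rhoAS, rhoA, map_apply,
    kroneckerMap_apply, det_fin_two, Fintype.sum_prod_type, Fin.sum_univ_two, sigmaY]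
  norm_num
  ring

theorem dual_monogamy_CoA_general (ψ : Fin 2 → Fin 2 → Fin 2 → ℂ) :
    0 ≤ (rhoA ψ).det.re ∧
    CoA (rhoAB ψ) ^ 2 + CoA (rhoAS ψ) ^ 2 ≥ 4 * (rhoA ψ).det.re := by
  refine ⟨(Complex.nonneg_iff.mp (rhoA_posSemidef ψ).det_nonneg).1, ?_⟩
  have hAB := re_trace_mul_spinFlip_le_CoA_sq (rhoAB_posSemidef ψ)
  have hAS := re_trace_mul_spinFlip_le_CoA_sq (rhoAS_posSemidef ψ)
  have hsum := congrArg Complex.re (trace_mul_spinFlip_rhoAB_add_rhoAS ψ)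
  norm_num at hsum
  linarith

theorem dual_monogamy_CoA (ψ : Fin 2 → Fin 2 → Fin 2 → ℂ)
    (hψ : ∑ i, ∑ j, ∑ l, Complex.normSq (ψ i j l) = 1) :
    0 ≤ (rhoA ψ).det.re ∧
    CoA (rhoAB ψ) ^ 2 + CoA (rhoAS ψ) ^ 2 ≥ 4 * (rhoA ψ).det.re :=
  dual_monogamy_CoA_general ψ
end
end

section
/- Every traceless complex matrix is unitarily similar to a matrix with vanishing diagonal: for any M : Matrix (Fin n) (Fin n) ℂ with Tr M = 0, there exists a unitary U ∈ U(n) such that every diagonal entry of U M U† is zero. -/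
/-
The numerical range `W(T) = {⟪x, T x⟫ : ‖x‖ = 1}` of an operator on a complex inner product space
is convex (Toeplitz–Hausdorff): after an affine change of `T` and a phase rotation of one vector,
the quadratic form is real along the chord between two unit vectors, and the intermediate value
theorem fills in the segment. The diagonal entries in any orthonormal basis lie in `W(T)` and
average to `trace T / dim`, so a traceless `T` has a unit vector `x` with `⟪x, T x⟫ = 0`.
Compressing `T` to `xᗮ` leaves a traceless operator, and induction on the dimension produces an
orthonormal basis in which every diagonal entry vanishes.
-/

open scoped InnerProductSpace ComplexConjugate

theorem Complex.exists_norm_eq_one_mul_im_eq_zero (w : ℂ) :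
    ∃ z : ℂ, ‖z‖ = 1 ∧ (z * w).im = 0 := by
  refine ⟨exp (-(w.arg * I)), by simpa using norm_exp_ofReal_mul_I (-w.arg), ?_⟩
  rw [← norm_mul_exp_arg_mul_I w, mul_left_comm, ← exp_add]
  simp

namespace LinearMap

section RCLike

variable {𝕜 E : Type*} [RCLike 𝕜] [NormedAddCommGroup E] [InnerProductSpace 𝕜 E]

def numericalRange (T : E →ₗ[𝕜] E) : Set 𝕜 := {z | ∃ x, ‖x‖ = 1 ∧ ⟪x, T x⟫_𝕜 = z}

theorem inner_mem_numericalRange (T : E →ₗ[𝕜] E) {x : E} (hx : ‖x‖ = 1) :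
    ⟪x, T x⟫_𝕜 ∈ T.numericalRange :=
  ⟨x, hx, rfl⟩

theorem inner_map_smul (T : E →ₗ[𝕜] E) (x : E) (a : 𝕜) :
    ⟪a • x, T (a • x)⟫_𝕜 = conj a * a * ⟪x, T x⟫_𝕜 := by
  simp only [map_smul, inner_smul_left, inner_smul_right]
  ring

theorem inner_map_smul_add_smul (T : E →ₗ[𝕜] E) (x y : E) (a b : 𝕜) :
    ⟪a • x + b • y, T (a • x + b • y)⟫_𝕜 =
      conj a * a * ⟪x, T x⟫_𝕜 + conj a * b * ⟪x, T y⟫_𝕜 + conj b * a * ⟪y, T x⟫_𝕜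
        + conj b * b * ⟪y, T y⟫_𝕜 := by
  simp only [map_add, map_smul, inner_add_left, inner_add_right, inner_smul_left,
    inner_smul_right]
  ring

end RCLike

section Complex

variable {E : Type*} [NormedAddCommGroup E] [InnerProductSpace ℂ E]

theorem exists_norm_eq_one_im_inner_map_smul_add_eq_zero (T : E →ₗ[ℂ] E) (x y : E) :
    ∃ z : ℂ, ‖z‖ = 1 ∧ (⟪x, T (z • y)⟫_ℂ + ⟪z • y, T x⟫_ℂ).im = 0 := by
  obtain ⟨z, hz, hzim⟩ := Complex.exists_norm_eq_one_mul_im_eq_zero (⟪x, T y⟫_ℂ - conj ⟪y, T x⟫_ℂ)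
  refine ⟨z, hz, ?_⟩
  simp only [Complex.mul_im, Complex.sub_im, Complex.sub_re, Complex.conj_re,
    Complex.conj_im] at hzim
  simp only [map_smul, inner_smul_right, inner_smul_left, Complex.add_im, Complex.mul_im,
    Complex.conj_re, Complex.conj_im]
  linarith

theorem ofReal_mem_numericalRange_of_inner_eq_one_of_inner_eq_zero (T : E →ₗ[ℂ] E) {x y : E}
    (hx : ‖x‖ = 1) (hy : ‖y‖ = 1) (hxT : ⟪x, T x⟫_ℂ = 1) (hyT : ⟪y, T y⟫_ℂ = 0) {θ : ℝ}
    (hθ : θ ∈ Set.Icc (0 : ℝ) 1) : (θ : ℂ) ∈ T.numericalRange := by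
  obtain ⟨z, hz, hs⟩ := T.exists_norm_eq_one_im_inner_map_smul_add_eq_zero x y
  set w := z • y
  have hw : ‖w‖ = 1 := by simp [w, norm_smul, hz, hy]
  have hwT : ⟪w, T w⟫_ℂ = 0 := by simp [w, hyT]
  set s := ⟪x, T w⟫_ℂ + ⟪w, T x⟫_ℂ
  set v : ℝ → E := fun t => ((1 - t : ℝ) : ℂ) • x + (t : ℂ) • w
  have hv : ∀ t, ⟪v t, T (v t)⟫_ℂ = (((1 - t) ^ 2 + (1 - t) * t * s.re : ℝ) : ℂ) := by
    intro t
    simp only [v, inner_map_smul_add_smul, hxT, hwT, Complex.conj_ofReal]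
    push_cast
    linear_combination ((1 - t : ℂ) * t) * (Complex.ext rfl hs : s = (s.re : ℂ))
  have hv_ne : ∀ t, v t ≠ 0 := by
    intro t ht
    -- `v t = 0` forces `(1 - t)² ⟪x, T x⟫ = t² ⟪w, T w⟫`, that is `t = 1`, but `v 1 = w ≠ 0`
    have hxw : ((1 - t : ℝ) : ℂ) • x = ((-t : ℝ) : ℂ) • w := by
      rw [eq_neg_of_add_eq_zero_left ht]
      push_cast
      rw [neg_smul]
    have hform := congrArg (fun u => ⟪u, T u⟫_ℂ) hxw
    simp only [inner_map_smul, hxT, hwT, Complex.conj_ofReal, mul_zero, mul_one] at hform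
    obtain rfl : t = 1 := by norm_cast at hform; nlinarith
    simp only [v, sub_self, Complex.ofReal_zero, zero_smul, Complex.ofReal_one, one_smul,
      zero_add] at ht
    simp [ht] at hw
  obtain ⟨t, -, ht⟩ : ∃ t ∈ Set.Icc (0 : ℝ) 1,
      (1 - t) ^ 2 + (1 - t) * t * s.re - θ * ‖v t‖ ^ 2 = 0 := by
    refine intermediate_value_Icc' zero_le_one (Continuous.continuousOn (by fun_prop)) ⟨?_, ?_⟩ <;>
      simp [v, hx, hw, hθ.1, hθ.2]
  refine ⟨(‖v t‖⁻¹ : ℂ) • v t, norm_smul_inv_norm (hv_ne t), ?_⟩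
  have hvt : (‖v t‖ : ℂ) ≠ 0 := by exact_mod_cast norm_ne_zero_iff.mpr (hv_ne t)
  rw [inner_map_smul, hv, sub_eq_zero.mp ht]
  simp only [map_inv₀, Complex.conj_ofReal]
  push_cast
  field_simp

theorem convex_numericalRange (T : E →ₗ[ℂ] E) : Convex ℝ T.numericalRange := by
  rintro _ ⟨x, hx, rfl⟩ _ ⟨y, hy, rfl⟩ s t hs ht hst
  set a := ⟪x, T x⟫_ℂ
  set b := ⟪y, T y⟫_ℂ
  by_cases hab : a = b
  · rw [hab, ← add_smul, hst, one_smul]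
    exact inner_mem_numericalRange T hy
  have hab' : a - b ≠ 0 := sub_ne_zero.mpr hab
  set S := (a - b)⁻¹ • (T - b • LinearMap.id)
  have hS : ∀ u, ‖u‖ = 1 → ⟪u, S u⟫_ℂ = (a - b)⁻¹ * (⟪u, T u⟫_ℂ - b) := by
    intro u hu
    simp [S, inner_self_eq_norm_sq_to_K, hu]
  obtain ⟨u, hu, huS⟩ := S.ofReal_mem_numericalRange_of_inner_eq_one_of_inner_eq_zero hx hy
    (by rw [hS x hx]; exact inv_mul_cancel₀ hab') (by rw [hS y hy, sub_self, mul_zero])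
    ⟨hs, by linarith⟩
  refine ⟨u, hu, ?_⟩
  rw [hS u hu] at huS
  field_simp at huS
  have ht' : (t : ℂ) = 1 - s := by exact_mod_cast eq_sub_of_add_eq' hst
  rw [Complex.real_smul, Complex.real_smul, ht']
  linear_combination huS

theorem inv_finrank_mul_trace_mem_numericalRange [FiniteDimensional ℂ E] [Nontrivial E]
    (T : E →ₗ[ℂ] E) : (Module.finrank ℂ E : ℂ)⁻¹ * trace ℂ E T ∈ T.numericalRange := by
  set b := stdOrthonormalBasis ℂ E
  have hn : (Module.finrank ℂ E : ℝ) ≠ 0 := by exact_mod_cast Module.finrank_pos.ne'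
  rw [trace_eq_sum_inner T b, Finset.mul_sum]
  convert (convex_numericalRange T).sum_mem (t := Finset.univ)
    (w := fun _ => (Module.finrank ℂ E : ℝ)⁻¹) (fun _ _ => by positivity) (by simp [hn])
    (fun i _ => inner_mem_numericalRange T (b.orthonormal.1 i)) using 2 with i
  simp [Complex.real_smul]

end Complex

section Compression

variable {𝕜 E : Type*} [RCLike 𝕜] [NormedAddCommGroup E] [InnerProductSpace 𝕜 E]

noncomputable def compression (T : E →ₗ[𝕜] E) (K : Submodule 𝕜 E) [K.HasOrthogonalProjection] :
    K →ₗ[𝕜] K :=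
  K.orthogonalProjectionOnto.toLinearMap ∘ₗ T ∘ₗ K.subtype

theorem inner_compression (T : E →ₗ[𝕜] E) (K : Submodule 𝕜 E) [K.HasOrthogonalProjection]
    (u v : K) : ⟪u, T.compression K v⟫_𝕜 = ⟪(u : E), T v⟫_𝕜 := by
  simp [compression]

end Compression

end LinearMap

section FinCons

variable {𝕜 E : Type*} [RCLike 𝕜] [NormedAddCommGroup E] [InnerProductSpace 𝕜 E]

theorem orthonormal_finCons {m : ℕ} {x : E} (hx : ‖x‖ = 1) {v : Fin m → E}
    (hv : Orthonormal 𝕜 v) (hxv : ∀ i, ⟪x, v i⟫_𝕜 = 0) :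
    Orthonormal 𝕜 (Fin.cons x v : Fin (m + 1) → E) := by
  have hvx : ∀ i, ⟪v i, x⟫_𝕜 = 0 := fun i => inner_eq_zero_symm.mp (hxv i)
  rw [orthonormal_iff_ite] at hv ⊢
  intro i j
  cases i using Fin.cases <;> cases j using Fin.cases <;>
    simp [hv, hxv, hvx, inner_self_eq_norm_sq_to_K, hx, (Fin.succ_ne_zero _).symm]

variable [FiniteDimensional 𝕜 E]

noncomputable def OrthonormalBasis.mkFinCons {m : ℕ} {x : E} (hx : ‖x‖ = 1)
    (c : OrthonormalBasis (Fin m) 𝕜 (𝕜 ∙ x)ᗮ) : OrthonormalBasis (Fin (m + 1)) 𝕜 E :=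
  have hon : Orthonormal 𝕜 (Fin.cons x fun i => (c i : E) : Fin (m + 1) → E) :=
    orthonormal_finCons hx (c.orthonormal.comp_linearIsometry (𝕜 ∙ x)ᗮ.subtypeₗᵢ)
      fun i => Submodule.mem_orthogonal_singleton_iff_inner_right.mp (c i).2
  have hx0 : x ≠ 0 := norm_ne_zero_iff.mp (by simp [hx])
  OrthonormalBasis.mk hon <| (hon.linearIndependent.span_eq_top_of_card_eq_finrank' <| by
    rw [← (𝕜 ∙ x).finrank_add_finrank_orthogonal, finrank_span_singleton hx0,
      Module.finrank_eq_card_basis c.toBasis]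
    simp [add_comm]).ge

@[simp]
theorem OrthonormalBasis.mkFinCons_zero {m : ℕ} {x : E} (hx : ‖x‖ = 1)
    (c : OrthonormalBasis (Fin m) 𝕜 (𝕜 ∙ x)ᗮ) : mkFinCons hx c 0 = x := by
  simp [mkFinCons]

@[simp]
theorem OrthonormalBasis.mkFinCons_succ {m : ℕ} {x : E} (hx : ‖x‖ = 1)
    (c : OrthonormalBasis (Fin m) 𝕜 (𝕜 ∙ x)ᗮ) (i : Fin m) : mkFinCons hx c i.succ = c i := by
  simp [mkFinCons]

theorem LinearMap.trace_eq_inner_add_trace_compression (T : E →ₗ[𝕜] E) {x : E}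
    (hx : ‖x‖ = 1) : trace 𝕜 E T = ⟪x, T x⟫_𝕜 + trace 𝕜 _ (T.compression (𝕜 ∙ x)ᗮ) := by
  set c := stdOrthonormalBasis 𝕜 (𝕜 ∙ x)ᗮ
  rw [trace_eq_sum_inner T (OrthonormalBasis.mkFinCons hx c), trace_eq_sum_inner _ c,
    Fin.sum_univ_succ]
  simp only [OrthonormalBasis.mkFinCons_zero, OrthonormalBasis.mkFinCons_succ, inner_compression]

end FinCons

theorem LinearMap.exists_orthonormalBasis_inner_self_eq_zero_of_trace_eq_zero {E : Type*}
    [NormedAddCommGroup E] [InnerProductSpace ℂ E] [FiniteDimensional ℂ E] {n : ℕ}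
    (hn : Module.finrank ℂ E = n) (T : E →ₗ[ℂ] E) (hT : trace ℂ E T = 0) :
    ∃ b : OrthonormalBasis (Fin n) ℂ E, ∀ i, ⟪b i, T (b i)⟫_ℂ = 0 := by
  induction n generalizing E with
  | zero => exact ⟨(stdOrthonormalBasis ℂ E).reindex (finCongr hn), fun i => i.elim0⟩
  | succ m ih =>
    have : Nontrivial E := Module.nontrivial_of_finrank_eq_succ hn
    have : Fact (Module.finrank ℂ E = m + 1) := ⟨hn⟩
    obtain ⟨x, hx, hxT⟩ : (0 : ℂ) ∈ T.numericalRange := by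
      simpa [hT] using T.inv_finrank_mul_trace_mem_numericalRange
    have hK : Module.finrank ℂ (ℂ ∙ x)ᗮ = m :=
      Submodule.finrank_orthogonal_span_singleton (norm_ne_zero_iff.mp (by simp [hx]))
    obtain ⟨c, hc⟩ := ih hK (T.compression (ℂ ∙ x)ᗮ)
      (by simpa [hxT, hT] using (T.trace_eq_inner_add_trace_compression hx).symm)
    refine ⟨OrthonormalBasis.mkFinCons hx c, Fin.cases (by simpa using hxT) fun i => ?_⟩
    rw [OrthonormalBasis.mkFinCons_succ, ← inner_compression, hc i]

open Matrix

section Matrix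

variable {𝕜 ι : Type*} [RCLike 𝕜] [Fintype ι] [DecidableEq ι]

theorem Matrix.trace_toEuclideanLin (A : Matrix ι ι 𝕜) :
    LinearMap.trace 𝕜 _ (toEuclideanLin A) = A.trace := by
  rw [toEuclideanLin, toLpLin_eq_toLin, LinearMap.trace_eq_matrix_trace 𝕜 (PiLp.basisFun 2 𝕜 ι),
    LinearMap.toMatrix_toLin]

theorem Matrix.conjTranspose_mul_mul_apply_eq_inner (V A : Matrix ι ι 𝕜) (i j : ι) :
    (Vᴴ * A * V) i j = ⟪WithLp.toLp 2 (Vᵀ i), toEuclideanLin A (WithLp.toLp 2 (Vᵀ j))⟫_𝕜 := by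
  rw [mul_mul_apply, dotProduct_comm]
  rfl

end Matrix

theorem traceless_unitarily_similar_to_zero_diagonal (n : ℕ)
    (M : Matrix (Fin n) (Fin n) ℂ) (hM : M.trace = 0) :
    ∃ U : Matrix (Fin n) (Fin n) ℂ, U ∈ Matrix.unitaryGroup (Fin n) ℂ ∧
      ∀ i : Fin n, (U * M * Uᴴ) i i = 0 := by
  obtain ⟨b, hb⟩ := (toEuclideanLin M).exists_orthonormalBasis_inner_self_eq_zero_of_trace_eq_zero
    finrank_euclideanSpace_fin (by rw [trace_toEuclideanLin, hM])
  set V := (EuclideanSpace.basisFun (Fin n) ℂ).toBasis.toMatrix b.toBasis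
  have hV : V ∈ unitaryGroup (Fin n) ℂ :=
    (EuclideanSpace.basisFun (Fin n) ℂ).toMatrix_orthonormalBasis_mem_unitary b
  refine ⟨Vᴴ, Unitary.star_mem hV, fun i => ?_⟩
  rw [conjTranspose_conjTranspose, conjTranspose_mul_mul_apply_eq_inner]
  exact hb i
end
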